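/- arXiv:2211.15247 — 5 statements merged into one kernel-verified Lean document; each statement's English description precedes it below -/
import Mathlib

section
/- Let G be a connected locally finite graph, let V_0 be a nonempty proper subset of the vertex set of G, let G_0 be the subgraph of G induced on V_0, and fix a vertex v_0 in V_0. For each v in V_0 let sigma_v^out denote the number of neighbours of v in G lying outside V_0. Then, with the sum taken in [0,infinity], sum over v in V_0 of sigma_v^{-1} * sigma_v^out * (sum over all finite walks omega from v_0 to v whose vertices all lie in V_0 of p_G(omega)) is at most 1. -/
open scoped ENNReal

variable {V : Type*}

/-- Weight of a walk: product over all vertices except the last of the inverse degree. -/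
noncomputable def wgt (G : SimpleGraph V) [G.LocallyFinite] {v u : V} (p : G.Walk v u) : ℝ≥0∞ :=
  (p.support.dropLast.map fun x => ((G.degree x : ℝ≥0∞))⁻¹).prod

/-!
Let `exitMass n x` be the probability that the simple random walk started at `x` stays in `V₀`
for `n` steps and then leaves it. Conditioning on the first step gives
`exitMass 0 x = 1_{V₀}(x) σ_x⁻¹ σ_x^out` and
`exitMass (n + 1) x = 1_{V₀}(x) σ_x⁻¹ ∑_{w ~ x} exitMass n w`,
so induction on `N`, uniformly in `x`, gives `∑_{n < N} exitMass n x ≤ 1_{V₀}(x)`: the inductive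
step is `σ_x⁻¹ (σ_x^out + #{w ~ x | w ∈ V₀}) = σ_x⁻¹ σ_x ≤ 1`. Grouping the walks in the theorem
by length turns its left-hand side into `∑_n exitMass n v₀`.
-/

open SimpleGraph

section

variable {G : SimpleGraph V} [G.LocallyFinite]

lemma wgt_cons {x w u : V} (h : G.Adj x w) (p : G.Walk w u) :
    wgt G (Walk.cons h p) = (G.degree x : ℝ≥0∞)⁻¹ * wgt G p := by
  simp [wgt, List.dropLast_cons_of_ne_nil p.support_ne_nil]

def SimpleGraph.Walk.lengthSuccEquiv (x u : V) (n : ℕ) :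
    {ω : G.Walk x u // ω.length = n + 1} ≃
      Σ w : G.neighborSet x, {ω : G.Walk w u // ω.length = n} where
  toFun
    | ⟨.cons h p, hp⟩ => ⟨⟨_, h⟩, p, by simpa using hp⟩
  invFun
    | ⟨⟨w, h⟩, p, hp⟩ => ⟨.cons ((G.mem_neighborSet x w).mp h) p, by simp [hp]⟩
  left_inv
    | ⟨.cons _ _, _⟩ => rfl
  right_inv
    | ⟨⟨_, _⟩, _, _⟩ => rfl

end

section

variable (G : SimpleGraph V) [G.LocallyFinite] (V₀ : Set V)

noncomputable def exitRate (v : V) : ℝ≥0∞ :=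
  (G.degree v : ℝ≥0∞)⁻¹ * {x | G.Adj v x ∧ x ∉ V₀}.ncard

noncomputable def stayWeight {x u : V} : G.Walk x u → ℝ≥0∞ :=
  {ω | ∀ y ∈ ω.support, y ∈ V₀}.indicator (wgt G)

noncomputable def walkMass (n : ℕ) (x u : V) : ℝ≥0∞ :=
  ∑' ω : {ω : G.Walk x u // ω.length = n}, stayWeight G V₀ ω.1

noncomputable def exitMass (n : ℕ) (x : V) : ℝ≥0∞ :=
  ∑' u : V₀, exitRate G V₀ u * walkMass G V₀ n x u

variable {G V₀}

lemma stayWeight_nil (x : V) : stayWeight G V₀ (Walk.nil : G.Walk x x) = V₀.indicator 1 x := by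
  by_cases hx : x ∈ V₀
  · rw [stayWeight, Set.indicator_of_mem (by simpa using hx), Set.indicator_of_mem hx]
    simp [wgt]
  · rw [stayWeight, Set.indicator_of_notMem (by simpa using hx), Set.indicator_of_notMem hx]

lemma stayWeight_cons {x w u : V} (h : G.Adj x w) (p : G.Walk w u) :
    stayWeight G V₀ (Walk.cons h p) =
      V₀.indicator (fun y => (G.degree y : ℝ≥0∞)⁻¹) x * stayWeight G V₀ p := by
  classical
  simp only [stayWeight, Set.indicator_apply, Set.mem_ofPred_eq, Walk.support_cons,
    List.mem_cons, forall_eq_or_imp, wgt_cons]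
  split_ifs <;> simp_all

lemma walkMass_zero_self (x : V) : walkMass G V₀ 0 x x = V₀.indicator 1 x := by
  rw [walkMass, tsum_eq_single ⟨Walk.nil, rfl⟩, stayWeight_nil]
  rintro ⟨ω, hω⟩ hne
  exact absurd (Subtype.ext (Walk.length_eq_zero_iff.mp hω).eq_nil) hne

lemma walkMass_zero_of_ne {x u : V} (h : x ≠ u) : walkMass G V₀ 0 x u = 0 := by
  rw [walkMass, ENNReal.tsum_eq_zero]
  rintro ⟨ω, hω⟩
  exact absurd (ω.eq_of_length_eq_zero hω) h

lemma walkMass_succ (n : ℕ) (x u : V) :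
    walkMass G V₀ (n + 1) x u =
      V₀.indicator (fun y => (G.degree y : ℝ≥0∞)⁻¹) x *
        ∑ w ∈ G.neighborFinset x, walkMass G V₀ n w u := by
  rw [walkMass, ← (Walk.lengthSuccEquiv x u n).symm.tsum_eq, ENNReal.tsum_sigma']
  simp only [Walk.lengthSuccEquiv, Equiv.coe_fn_symm_mk, stayWeight_cons, ENNReal.tsum_mul_left,
    tsum_fintype, ← Finset.mul_sum]
  congr 1
  exact (Finset.sum_subtype _ (G.mem_neighborFinset x) (fun w => walkMass G V₀ n w u)).symm

lemma exitMass_zero (x : V) : exitMass G V₀ 0 x = V₀.indicator (exitRate G V₀) x := by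
  by_cases hx : x ∈ V₀
  · rw [exitMass, tsum_eq_single ⟨x, hx⟩, walkMass_zero_self, Set.indicator_of_mem hx,
      Set.indicator_of_mem hx, Pi.one_apply, mul_one]
    intro u hu
    rw [walkMass_zero_of_ne (fun h => hu (Subtype.ext h.symm)), mul_zero]
  · rw [exitMass, Set.indicator_of_notMem hx, ENNReal.tsum_eq_zero]
    intro u
    rw [walkMass_zero_of_ne (by rintro rfl; exact hx u.2), mul_zero]

lemma exitMass_succ (n : ℕ) (x : V) :
    exitMass G V₀ (n + 1) x =
      V₀.indicator (fun y => (G.degree y : ℝ≥0∞)⁻¹) x *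
        ∑ w ∈ G.neighborFinset x, exitMass G V₀ n w := by
  simp only [exitMass, walkMass_succ, Finset.mul_sum, mul_left_comm (exitRate G V₀ _)]
  rw [Summable.tsum_finsetSum fun _ _ => ENNReal.summable]
  simp only [ENNReal.tsum_mul_left]

variable (G V₀) in
lemma exitRate_add_inv_degree_mul_sum_indicator_le_one (x : V) :
    exitRate G V₀ x + (G.degree x : ℝ≥0∞)⁻¹ * ∑ w ∈ G.neighborFinset x, V₀.indicator 1 w
      ≤ 1 := by
  classical
  have hout : {y | G.Adj x y ∧ y ∉ V₀} = ↑{w ∈ G.neighborFinset x | w ∉ V₀} := by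
    ext; simp
  have hsplit : ({y | G.Adj x y ∧ y ∉ V₀}.ncard : ℝ≥0∞) +
      ∑ w ∈ G.neighborFinset x, V₀.indicator 1 w = G.degree x := by
    simp only [hout, Set.ncard_coe_finset, Set.indicator_apply, Pi.one_apply, Finset.sum_boole]
    norm_cast
    rw [add_comm, Finset.card_filter_add_card_filter_not, card_neighborFinset_eq_degree]
  rw [exitRate, ← mul_add, hsplit]
  exact ENNReal.inv_mul_le_one _

lemma sum_range_exitMass_le_indicator (N : ℕ) (x : V) :
    ∑ n ∈ Finset.range N, exitMass G V₀ n x ≤ V₀.indicator 1 x := by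
  induction N generalizing x with
  | zero => simp
  | succ N ih =>
    rw [Finset.sum_range_succ', exitMass_zero]
    simp only [exitMass_succ, ← Finset.mul_sum]
    by_cases hx : x ∈ V₀
    · simp only [Set.indicator_of_mem hx, Pi.one_apply]
      rw [Finset.sum_comm, add_comm]
      refine le_trans ?_ (exitRate_add_inv_degree_mul_sum_indicator_le_one G V₀ x)
      gcongr with w
      exact ih w
    · simp [Set.indicator_of_notMem hx]

lemma tsum_wgt_eq_tsum_walkMass (x u : V) :
    ∑' ω : {ω : G.Walk x u // ∀ y ∈ ω.support, y ∈ V₀}, wgt G ω.1 =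
      ∑' n, walkMass G V₀ n x u := by
  refine (tsum_subtype {ω : G.Walk x u | ∀ y ∈ ω.support, y ∈ V₀} (wgt G)).trans ?_
  rw [← (Equiv.sigmaFiberEquiv Walk.length).tsum_eq, ENNReal.tsum_sigma']
  rfl

end

theorem exit_probability_le_one_general (G : SimpleGraph V) [G.LocallyFinite]
    (V₀ : Set V)
    (v₀ : V) :
    ∑' v : V₀, ((G.degree (v : V) : ℝ≥0∞))⁻¹ *
        (({x | G.Adj (v : V) x ∧ x ∉ V₀}.ncard : ℝ≥0∞)) *
        ∑' ω : {ω : G.Walk v₀ (v : V) // ∀ x ∈ ω.support, x ∈ V₀}, wgt G ω.1 ≤ 1 := by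
  calc _ = ∑' v : V₀, exitRate G V₀ v * ∑' n, walkMass G V₀ n v₀ v := by
        simp only [tsum_wgt_eq_tsum_walkMass, exitRate]
    _ = ∑' n, exitMass G V₀ n v₀ := by
        simp only [exitMass, ← ENNReal.tsum_mul_left]
        exact ENNReal.tsum_comm
    _ ≤ 1 := ENNReal.tsum_le_of_sum_range_le fun N =>
        (sum_range_exitMass_le_indicator N v₀).trans
          (Set.indicator_le_self' (fun _ _ => zero_le_one) v₀)

/-- For a connected locally finite graph `G`, a nonempty proper vertex subset `V₀`
and `v₀ ∈ V₀`, the total probability of leaving the induced subgraph on `V₀` is at most `1`: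
`∑_{v ∈ V₀} σ_v⁻¹ σ_v^out ∑_{ω : v₀ → v, ω ⊆ V₀} p_G(ω) ≤ 1`. -/
theorem exit_probability_le_one (G : SimpleGraph V) [G.LocallyFinite] (hG : G.Connected)
    (V₀ : Set V) (hne : V₀.Nonempty) (hproper : V₀ ≠ Set.univ)
    (v₀ : V) (hv₀ : v₀ ∈ V₀) :
    ∑' v : V₀, ((G.degree (v : V) : ℝ≥0∞))⁻¹ *
        (({x | G.Adj (v : V) x ∧ x ∉ V₀}.ncard : ℝ≥0∞)) *
        ∑' ω : {ω : G.Walk v₀ (v : V) // ∀ x ∈ ω.support, x ∈ V₀}, wgt G ω.1 ≤ 1 :=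
  exit_probability_le_one_general G V₀ v₀
end

section
/- Let G be a connected locally finite graph and let v_0 and u_0 be two distinct vertices of G. Then the sum, taken in [0,infinity], over all closed walks omega from v_0 to v_0 that do not visit u_0 of p_G(omega) is at most sigma_{v_0} * d_G(v_0, u_0), where d_G denotes the graph distance in G. -/
/-!
Let `g(x)` be the total weight of the walks of length `< N` from `x` to `v₀` avoiding `u₀`.
Splitting off the first step shows that `g` vanishes at `u₀`, has finite support and satisfies
`Δg ≤ σ_{v₀} δ_{v₀}` away from `u₀`, where `Δg(x) = σ_x g(x) - ∑_{y ~ x} g(y)`. Pairing `Δg`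
with `g` bounds the Dirichlet energy `∑_{xy ∈ E} (g x - g y)²` by `σ_{v₀} g(v₀)`, while
Cauchy–Schwarz along a geodesic from `v₀` to `u₀` bounds it below by `g(v₀)² / d(v₀, u₀)`.
Hence `g(v₀) ≤ σ_{v₀} d(v₀, u₀)` for every `N`, and the closed walks of the theorem are among
the walks counted by `g(v₀)`.
-/

open scoped ENNReal

variable {V : Type*}

open Finset

namespace SimpleGraph

variable {G : SimpleGraph V}

theorem two_mul_sum_sq_sub_getVert_le [DecidableRel G.Adj] {u v : V} {p : G.Walk u v}
    (hp : p.IsPath) {T : Finset V} (hT : ∀ w ∈ p.support, w ∈ T) (f : V → ℝ) :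
    2 * ∑ k ∈ range p.length, (f (p.getVert k) - f (p.getVert (k + 1))) ^ 2 ≤
      ∑ x ∈ T, ∑ y ∈ T, (if G.Adj x y then (f x - f y) ^ 2 else 0) := by
  classical
  set φ : V × V → ℝ := fun e => if G.Adj e.1 e.2 then (f e.1 - f e.2) ^ 2 else 0
  set fwd : ℕ → V × V := fun k => (p.getVert k, p.getVert (k + 1))
  set bwd : ℕ → V × V := fun k => (p.getVert (k + 1), p.getVert k)
  have hinj {i j : ℕ} (hi : i ≤ p.length) (hj : j ≤ p.length)
      (h : p.getVert i = p.getVert j) : i = j :=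
    hp.getVert_injOn hi hj h
  have hfwd : Set.InjOn fwd (range p.length) := fun i hi j hj h => by
    rw [mem_coe, mem_range] at hi hj
    exact hinj hi.le hj.le (Prod.ext_iff.1 h).1
  have hbwd : Set.InjOn bwd (range p.length) := fun i hi j hj h => by
    rw [mem_coe, mem_range] at hi hj
    exact hinj hi.le hj.le (Prod.ext_iff.1 h).2
  have hdisj : Disjoint ((range p.length).image fwd) ((range p.length).image bwd) := by
    rw [Finset.disjoint_left]
    intro e hef heb
    obtain ⟨i, hi, rfl⟩ := mem_image.1 hef
    obtain ⟨j, hj, h⟩ := mem_image.1 heb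
    rw [mem_range] at hi hj
    have h₁ := hinj (by omega) (by omega) (Prod.ext_iff.1 h).1
    have h₂ := hinj (by omega) (by omega) (Prod.ext_iff.1 h).2
    omega
  have hsub : (range p.length).image fwd ∪ (range p.length).image bwd ⊆ T ×ˢ T := by
    have hT' (k : ℕ) : p.getVert k ∈ T := hT _ (p.getVert_mem_support k)
    simp only [union_subset_iff, image_subset_iff, mem_product]
    exact ⟨fun k _ => ⟨hT' k, hT' (k + 1)⟩, fun k _ => ⟨hT' (k + 1), hT' k⟩⟩
  have hφ (k : ℕ) (hk : k ∈ range p.length) :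
      φ (fwd k) = (f (p.getVert k) - f (p.getVert (k + 1))) ^ 2 ∧
        φ (bwd k) = (f (p.getVert k) - f (p.getVert (k + 1))) ^ 2 := by
    have hadj := p.adj_getVert_succ (mem_range.1 hk)
    simp only [φ, fwd, bwd, if_pos hadj, if_pos hadj.symm, true_and]
    ring
  calc 2 * ∑ k ∈ range p.length, (f (p.getVert k) - f (p.getVert (k + 1))) ^ 2
      = ∑ e ∈ (range p.length).image fwd ∪ (range p.length).image bwd, φ e := by
        rw [sum_union hdisj, sum_image hfwd, sum_image hbwd, two_mul]
        exact congrArg₂ (· + ·) (sum_congr rfl fun k hk => (hφ k hk).1.symm)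
          (sum_congr rfl fun k hk => (hφ k hk).2.symm)
    _ ≤ ∑ e ∈ T ×ˢ T, φ e :=
        sum_le_sum_of_subset_of_nonneg hsub fun e _ _ => by
          simp only [φ]
          split_ifs <;> positivity
    _ = _ := sum_product _ _ _

section Laplacian

variable [G.LocallyFinite]

variable (G) in
noncomputable def laplacian (f : V → ℝ) (x : V) : ℝ :=
  G.degree x * f x - ∑ y ∈ G.neighborFinset x, f y

theorem sum_sum_adj_sq_sub_eq [DecidableRel G.Adj] {T : Finset V} {f : V → ℝ}
    (hT : ∀ x ∈ T, f x ≠ 0 → G.neighborFinset x ⊆ T) :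
    ∑ x ∈ T, ∑ y ∈ T, (if G.Adj x y then (f x - f y) ^ 2 else 0) =
      2 * ∑ x ∈ T, f x * G.laplacian f x := by
  have hrow : ∀ x ∈ T, f x * G.laplacian f x =
      ∑ y ∈ T, if G.Adj x y then f x * (f x - f y) else 0 := by
    intro x hx
    by_cases hfx : f x = 0
    · simp [hfx]
    have hN : T.filter (G.Adj x) = G.neighborFinset x := by
      ext y
      rw [mem_filter, mem_neighborFinset]
      exact ⟨And.right, fun h => ⟨hT x hx hfx ((G.mem_neighborFinset x y).2 h), h⟩⟩
    rw [← sum_filter, hN, laplacian, ← card_neighborFinset_eq_degree]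
    simp only [mul_sub, sum_sub_distrib, mul_sum, sum_const, nsmul_eq_mul]
    ring
  have hswap : ∑ x ∈ T, ∑ y ∈ T, (if G.Adj x y then f x * (f x - f y) else 0) =
      ∑ x ∈ T, ∑ y ∈ T, (if G.Adj x y then f y * (f y - f x) else 0) := by
    rw [sum_comm]
    simp only [G.adj_comm]
  rw [sum_congr rfl hrow, two_mul]
  nth_rewrite 2 [hswap]
  rw [← sum_add_distrib]
  refine sum_congr rfl fun x _ => ?_
  rw [← sum_add_distrib]
  refine sum_congr rfl fun y _ => ?_
  split_ifs <;> ring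

theorem le_degree_mul_dist_of_laplacian_le [DecidableEq V] {v₀ u₀ : V}
    (h : G.Reachable v₀ u₀) {f : V → ℝ} (hf : ∀ x, 0 ≤ f x) (hfin : f.HasFiniteSupport)
    (hu : f u₀ = 0)
    (hlap : ∀ x ≠ u₀, G.laplacian f x ≤ if x = v₀ then (G.degree v₀ : ℝ) else 0) :
    f v₀ ≤ G.degree v₀ * G.dist v₀ u₀ := by
  classical
  obtain ⟨p, hp, hlen⟩ := h.exists_path_of_dist
  set S := hfin.toFinset
  set T := S ∪ S.biUnion (fun x => G.neighborFinset x) ∪ p.support.toFinset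
  have hT : ∀ x ∈ T, f x ≠ 0 → G.neighborFinset x ⊆ T := fun x _ hx y hy =>
    mem_union_left _ (mem_union_right _ (mem_biUnion.2 ⟨x, hfin.mem_toFinset.2 hx, hy⟩))
  have hupper : ∑ x ∈ T, f x * G.laplacian f x ≤ G.degree v₀ * f v₀ := by
    calc ∑ x ∈ T, f x * G.laplacian f x
        ≤ ∑ x ∈ T, f x * (if x = v₀ then (G.degree v₀ : ℝ) else 0) := by
          refine sum_le_sum fun x _ => ?_
          by_cases hx : x = u₀
          · simp [hx, hu]
          · exact mul_le_mul_of_nonneg_left (hlap x hx) (hf x)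
      _ ≤ G.degree v₀ * f v₀ := by
          simp only [mul_ite, mul_zero, sum_ite_eq']
          split_ifs
          exacts [(mul_comm _ _).le, mul_nonneg (Nat.cast_nonneg _) (hf v₀)]
  have hlower := two_mul_sum_sq_sub_getVert_le hp
    (T := T) (fun w hw => mem_union_right _ (List.mem_toFinset.2 hw)) f
  rw [sum_sum_adj_sq_sub_eq hT] at hlower
  have htel : ∑ k ∈ range p.length, (f (p.getVert k) - f (p.getVert (k + 1))) = f v₀ := by
    rw [sum_range_sub', Walk.getVert_zero, Walk.getVert_length, hu, sub_zero]
  have hCS := sq_sum_le_card_mul_sum_sq (s := range p.length)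
    (f := fun k => f (p.getVert k) - f (p.getVert (k + 1)))
  rw [htel, card_range, hlen] at hCS
  rw [hlen] at hlower
  have hsq : f v₀ * f v₀ ≤ (G.degree v₀ * G.dist v₀ u₀) * f v₀ := by
    nlinarith [hCS, hlower, hupper]
  rcases (hf v₀).eq_or_lt with h0 | hpos
  · rw [← h0]; positivity
  · exact le_of_mul_le_mul_right hsq hpos

end Laplacian

section WalkWeight

variable [G.LocallyFinite]

theorem wgt_cons {x y v : V} (h : G.Adj x y) (p : G.Walk y v) :
    wgt G (Walk.cons h p) = (G.degree x : ℝ≥0∞)⁻¹ * wgt G p := by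
  simp [wgt, List.dropLast_cons_of_ne_nil p.support_ne_nil]

theorem wgt_ne_top {x v : V} (p : G.Walk x v) : wgt G p ≠ ⊤ := by
  induction p with
  | nil => simp [wgt]
  | cons h p ih =>
    rw [wgt_cons]
    have hdeg : (G.degree _ : ℝ≥0∞) ≠ 0 :=
      Nat.cast_ne_zero.2 ((G.degree_pos_iff_exists_adj _).2 ⟨_, h⟩).ne'
    exact ENNReal.mul_ne_top (ENNReal.inv_ne_top.2 hdeg) ih

variable [DecidableEq V]

theorem sum_finsetWalkLength_succ {M : Type*} [AddCommMonoid M] (n : ℕ) (u v : V)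
    (φ : G.Walk u v → M) :
    ∑ p ∈ G.finsetWalkLength (n + 1) u v, φ p =
      ∑ w : G.neighborSet u, ∑ q ∈ G.finsetWalkLength n w v,
        φ (Walk.cons ((G.mem_neighborSet u w).1 w.2) q) := by
  rw [finsetWalkLength, sum_biUnion]
  · simp only [sum_map]
    rfl
  · rintro ⟨w, hw⟩ - ⟨w', hw'⟩ - hne
    rw [Function.onFun, Finset.disjoint_left]
    intro p hp hp'
    obtain ⟨q, -, rfl⟩ := mem_map.1 hp
    obtain ⟨q', -, h⟩ := mem_map.1 hp'
    exact hne (Subtype.ext (Walk.cons.inj h).1.symm)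

variable (G) in
noncomputable def avoidingWeight (v₀ u₀ : V) (n : ℕ) (x : V) : ℝ :=
  ∑ p ∈ G.finsetWalkLength n x v₀, if u₀ ∈ p.support then 0 else (wgt G p).toReal

variable {v₀ u₀ : V}

theorem avoidingWeight_nonneg (n : ℕ) (x : V) : 0 ≤ G.avoidingWeight v₀ u₀ n x :=
  sum_nonneg fun _ _ => by split_ifs <;> simp

theorem avoidingWeight_avoided (n : ℕ) : G.avoidingWeight v₀ u₀ n u₀ = 0 :=
  sum_eq_zero fun p _ => if_pos p.start_mem_support

theorem avoidingWeight_zero {x : V} (hx : x ≠ u₀) :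
    G.avoidingWeight v₀ u₀ 0 x = if x = v₀ then 1 else 0 := by
  obtain rfl | h := eq_or_ne x v₀ <;> simp [avoidingWeight, finsetWalkLength, wgt, hx.symm, *]

theorem avoidingWeight_succ {x : V} (hx : x ≠ u₀) (n : ℕ) :
    G.avoidingWeight v₀ u₀ (n + 1) x =
      (G.degree x : ℝ)⁻¹ * ∑ y ∈ G.neighborFinset x, G.avoidingWeight v₀ u₀ n y := by
  rw [avoidingWeight, sum_finsetWalkLength_succ,
    sum_subtype (G.neighborFinset x) (fun y => G.mem_neighborFinset x y), mul_sum]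
  refine sum_congr rfl fun w _ => ?_
  rw [avoidingWeight, mul_sum]
  refine sum_congr rfl fun q _ => ?_
  simp only [Walk.support_cons, List.mem_cons, Ne.symm hx, false_or, wgt_cons,
    ENNReal.toReal_mul, ENNReal.toReal_inv, ENNReal.toReal_natCast]
  split_ifs <;> simp

theorem ofReal_avoidingWeight (n : ℕ) (x : V) :
    ENNReal.ofReal (G.avoidingWeight v₀ u₀ n x) =
      ∑ p ∈ G.finsetWalkLength n x v₀, if u₀ ∈ p.support then 0 else wgt G p := by
  rw [avoidingWeight, ENNReal.ofReal_sum_of_nonneg fun _ _ => by split_ifs <;> simp]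
  refine sum_congr rfl fun p _ => ?_
  split_ifs
  · simp
  · exact ENNReal.ofReal_toReal (wgt_ne_top p)

theorem hasFiniteSupport_avoidingWeight (n : ℕ) :
    (G.avoidingWeight v₀ u₀ n).HasFiniteSupport := by
  induction n with
  | zero =>
    refine (Set.finite_singleton v₀).subset fun x hx => ?_
    have hxu : x ≠ u₀ := by rintro rfl; exact hx (avoidingWeight_avoided _)
    rw [Function.mem_support, avoidingWeight_zero hxu] at hx
    simpa using hx
  | succ n ih =>
    refine (ih.biUnion fun y _ => (G.neighborSet y).toFinite).subset fun x hx => ?_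
    have hxu : x ≠ u₀ := by rintro rfl; exact hx (avoidingWeight_avoided _)
    rw [Function.mem_support, avoidingWeight_succ hxu] at hx
    obtain ⟨y, hy, hny⟩ := exists_ne_zero_of_sum_ne_zero (right_ne_zero_of_mul hx)
    exact Set.mem_biUnion hny ((G.mem_neighborFinset x y).1 hy).symm

theorem laplacian_sum_avoidingWeight_le (N : ℕ) {x : V} (hx : x ≠ u₀) :
    G.laplacian (fun y => ∑ k ∈ range N, G.avoidingWeight v₀ u₀ k y) x ≤
      if x = v₀ then (G.degree v₀ : ℝ) else 0 := by
  set f := fun y => ∑ k ∈ range N, G.avoidingWeight v₀ u₀ k y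
  set S := ∑ y ∈ G.neighborFinset x, f y
  have hrec : ∑ k ∈ range (N + 1), G.avoidingWeight v₀ u₀ k x =
      (if x = v₀ then 1 else 0) + (G.degree x : ℝ)⁻¹ * S := by
    simp only [sum_range_succ', avoidingWeight_zero hx, avoidingWeight_succ hx, ← mul_sum, S, f]
    rw [sum_comm, add_comm]
  have hmono : f x ≤ ∑ k ∈ range (N + 1), G.avoidingWeight v₀ u₀ k x := by
    rw [sum_range_succ]
    exact le_add_of_nonneg_right (avoidingWeight_nonneg N x)
  -- `σ * σ⁻¹ ≤ 1` also holds for an isolated `x`, where `σ⁻¹ = 0` in `ℝ`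
  have hS : (G.degree x : ℝ) * (G.degree x : ℝ)⁻¹ * S ≤ S :=
    mul_le_of_le_one_left (sum_nonneg fun y _ => sum_nonneg fun k _ => avoidingWeight_nonneg k y)
      mul_inv_le_one
  calc G.laplacian f x
      ≤ G.degree x * ((if x = v₀ then 1 else 0) + (G.degree x : ℝ)⁻¹ * S) - S := by
        rw [laplacian, ← hrec]
        gcongr
    _ ≤ if x = v₀ then (G.degree v₀ : ℝ) else 0 := by
        rw [mul_add, ← mul_assoc]
        split_ifs with h
        · subst h; linarith
        · linarith

theorem sum_wgt_le_ofReal_sum_avoidingWeight {x : V} {s : Finset (G.Walk x v₀)} {N : ℕ}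
    (hs : ∀ p ∈ s, u₀ ∉ p.support ∧ p.length < N) :
    ∑ p ∈ s, wgt G p ≤
      ENNReal.ofReal (∑ k ∈ range N, G.avoidingWeight v₀ u₀ k x) := by
  rw [ENNReal.ofReal_sum_of_nonneg fun k _ => avoidingWeight_nonneg k x]
  simp only [ofReal_avoidingWeight]
  calc ∑ p ∈ s, wgt G p = ∑ p ∈ s, if u₀ ∈ p.support then 0 else wgt G p :=
        sum_congr rfl fun p hp => (if_neg (hs p hp).1).symm
    _ ≤ ∑ p ∈ G.finsetWalkLengthLT N x v₀, if u₀ ∈ p.support then 0 else wgt G p :=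
        sum_le_sum_of_subset fun p hp => mem_finsetWalkLengthLT_iff.2 (hs p hp).2
    _ = _ := sum_disjiUnion _ _ _

theorem sum_avoidingWeight_le_degree_mul_dist (h : G.Reachable v₀ u₀) (N : ℕ) :
    ∑ k ∈ range N, G.avoidingWeight v₀ u₀ k v₀ ≤ G.degree v₀ * G.dist v₀ u₀ :=
  le_degree_mul_dist_of_laplacian_le h (fun y => sum_nonneg fun k _ => avoidingWeight_nonneg k y)
    (Function.HasFiniteSupport.sum (fun k => hasFiniteSupport_avoidingWeight k) (range N))
    (sum_eq_zero fun k _ => avoidingWeight_avoided k)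
    (fun _ hx => laplacian_sum_avoidingWeight_le N hx)

end WalkWeight

end SimpleGraph

open SimpleGraph

theorem closed_walks_avoiding_le_general (G : SimpleGraph V) [G.LocallyFinite] (hG : G.Connected)
    (v₀ u₀ : V) :
    ∑' ω : {ω : G.Walk v₀ v₀ // u₀ ∉ ω.support}, wgt G ω.1 ≤
      (G.degree v₀ : ℝ≥0∞) * (G.dist v₀ u₀ : ℝ≥0∞) := by
  classical
  refine tsum_le_of_sum_le' zero_le fun s => ?_
  set N := s.sup (fun ω => ω.1.length) + 1
  have hs : ∀ p ∈ s.map (Function.Embedding.subtype _),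
      u₀ ∉ p.support ∧ p.length < N := by
    intro p hp
    obtain ⟨ω, hω, rfl⟩ := mem_map.1 hp
    exact ⟨ω.2, Nat.lt_succ_of_le (le_sup (f := fun ω => ω.1.length) hω)⟩
  calc ∑ ω ∈ s, wgt G ω.1 = ∑ p ∈ s.map (Function.Embedding.subtype _), wgt G p := by
        rw [sum_map]; rfl
    _ ≤ ENNReal.ofReal (∑ k ∈ range N, G.avoidingWeight v₀ u₀ k v₀) :=
        sum_wgt_le_ofReal_sum_avoidingWeight hs
    _ ≤ ENNReal.ofReal (G.degree v₀ * G.dist v₀ u₀) :=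
        ENNReal.ofReal_le_ofReal
          (sum_avoidingWeight_le_degree_mul_dist (hG.preconnected v₀ u₀) N)
    _ = _ := by rw [ENNReal.ofReal_mul (Nat.cast_nonneg _)]; simp

/-- For a connected locally finite graph `G` and distinct vertices `v₀ ≠ u₀`, the weighted
sum over closed walks from `v₀` that avoid `u₀` is at most `σ_{v₀} · d_G(v₀,u₀)`. -/
theorem closed_walks_avoiding_le (G : SimpleGraph V) [G.LocallyFinite] (hG : G.Connected)
    (v₀ u₀ : V) (hne : v₀ ≠ u₀) :
    ∑' ω : {ω : G.Walk v₀ v₀ // u₀ ∉ ω.support}, wgt G ω.1 ≤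
      (G.degree v₀ : ℝ≥0∞) * (G.dist v₀ u₀ : ℝ≥0∞) :=
  closed_walks_avoiding_le_general G hG v₀ u₀
end

section
/- Let theta > 0, let g = 1/(2 cosh theta), let z be a real number, and define the sequence (w_h)_{h >= 1} by w_1 = z/g and w_h = 1/(1 - g^2 * w_{h-1}) for h >= 2. Suppose sinh(k*theta) - z*sinh((k-1)*theta) is nonzero for k = 1, ..., h. Then w_h = 2 cosh(theta) * ( sinh((h-1)theta) - z*sinh((h-2)theta) ) / ( sinh(h*theta) - z*sinh((h-1)theta) ). -/
/-!
Writing `D k = sinh (k θ) - z sinh ((k - 1) θ)` (`sinhCombination θ z k`), the claim is `w h = 2 cosh θ · D (h - 1) / D h`.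
Since `sinh ((k + 1) θ) + sinh ((k - 1) θ) = 2 cosh θ · sinh (k θ)`, the sequence `D` satisfies the
three-term recurrence `D (k + 1) = 2 cosh θ · D k - D (k - 1)`, and any such recurrence turns the
continued-fraction step `w ↦ 1 / (1 - g² w)`, `g = 1 / (2 cosh θ)`, into the shift `k ↦ k + 1`
of the ratio `g⁻¹ D (k - 1) / D k`.
-/

open Real

lemma Real.sinh_add_add_sinh_sub (x y : ℝ) : sinh (x + y) + sinh (x - y) = 2 * cosh y * sinh x := by
  rw [sinh_add, sinh_sub]; ring

lemma one_div_one_sub_sq_mul_ratio {g a b : ℝ} (hg : g ≠ 0) (hb : b ≠ 0) :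
    1 / (1 - g ^ 2 * (g⁻¹ * a / b)) = g⁻¹ * b / (g⁻¹ * b - a) := by
  field_simp

theorem ratio_of_three_term_recurrence {g : ℝ} (hg : g ≠ 0) {D w : ℕ → ℝ}
    (hD : ∀ n, D (n + 2) = g⁻¹ * D (n + 1) - D n)
    (hw1 : w 1 = g⁻¹ * D 0 / D 1) (hwrec : ∀ n, 1 ≤ n → w (n + 1) = 1 / (1 - g ^ 2 * w n))
    (n : ℕ) (hnz : ∀ k, 1 ≤ k → k ≤ n → D k ≠ 0) :
    w (n + 1) = g⁻¹ * D n / D (n + 1) := by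
  induction n with
  | zero => simpa using hw1
  | succ n ih =>
    rw [hwrec _ (by omega), ih fun k hk hkn => hnz k hk (by omega),
      one_div_one_sub_sq_mul_ratio hg (hnz _ (by omega) le_rfl), hD]

noncomputable def sinhCombination (θ z : ℝ) (k : ℕ) : ℝ := sinh (k * θ) - z * sinh ((k - 1) * θ)

lemma sinhCombination_add_two (θ z : ℝ) (n : ℕ) :
    sinhCombination θ z (n + 2) =
      2 * cosh θ * sinhCombination θ z (n + 1) - sinhCombination θ z n := by
  have h₁ := sinh_add_add_sinh_sub ((n + 1) * θ) θ
  have h₀ := sinh_add_add_sinh_sub (n * θ) θ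
  simp only [sinhCombination]
  push_cast
  ring_nf at h₀ h₁ ⊢
  linear_combination h₁ - z * h₀

theorem tree_recursion_solution_general (θ z : ℝ) (g : ℝ)
    (hg : g = 1 / (2 * Real.cosh θ))
    (w : ℕ → ℝ) (hw1 : w 1 = z / g)
    (hwrec : ∀ h : ℕ, 2 ≤ h → w h = 1 / (1 - g ^ 2 * w (h - 1)))
    (h : ℕ) (hh : 1 ≤ h)
    (hnz : ∀ k : ℕ, 1 ≤ k → k ≤ h →
      Real.sinh ((k : ℝ) * θ) - z * Real.sinh (((k : ℝ) - 1) * θ) ≠ 0) :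
    w h = 2 * Real.cosh θ *
        (Real.sinh (((h : ℝ) - 1) * θ) - z * Real.sinh (((h : ℝ) - 2) * θ)) /
        (Real.sinh ((h : ℝ) * θ) - z * Real.sinh (((h : ℝ) - 1) * θ)) := by
  obtain ⟨n, rfl⟩ : ∃ n, h = n + 1 := ⟨h - 1, by omega⟩
  have hg_inv : g⁻¹ = 2 * cosh θ := by rw [hg, one_div, inv_inv]
  have hg0 : g ≠ 0 := by rw [hg]; positivity
  have hsinh : sinh θ ≠ 0 := by simpa using hnz 1 le_rfl (by omega)
  have hw1_ratio : w 1 = g⁻¹ * sinhCombination θ z 0 / sinhCombination θ z 1 := by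
    have hD0 : sinhCombination θ z 0 = z * sinh θ := by simp [sinhCombination]
    have hD1 : sinhCombination θ z 1 = sinh θ := by simp [sinhCombination]
    rw [hw1, hD0, hD1, mul_div_assoc, mul_div_cancel_right₀ z hsinh, div_eq_inv_mul]
  have hw := ratio_of_three_term_recurrence hg0 (hg_inv ▸ sinhCombination_add_two θ z) hw1_ratio
    (fun n hn => by simpa using hwrec (n + 1) (by omega)) n (fun k hk hkn => hnz k hk (by omega))
  rw [hw, hg_inv, sinhCombination, sinhCombination]
  push_cast
  ring_nf

/-- Closed-form solution of the causal-triangulation tree recursion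
`w_1 = z/g`, `w_h = 1/(1 - g² w_{h-1})` with `g = 1/(2 cosh θ)`:
`w_h = 2 cosh θ (sinh((h-1)θ) - z sinh((h-2)θ)) / (sinh(hθ) - z sinh((h-1)θ))`,
provided the denominators `sinh(kθ) - z sinh((k-1)θ)` are nonzero for `k = 1, …, h`. -/
theorem tree_recursion_solution (θ z : ℝ) (hθ : 0 < θ) (g : ℝ)
    (hg : g = 1 / (2 * Real.cosh θ))
    (w : ℕ → ℝ) (hw1 : w 1 = z / g)
    (hwrec : ∀ h : ℕ, 2 ≤ h → w h = 1 / (1 - g ^ 2 * w (h - 1)))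
    (h : ℕ) (hh : 1 ≤ h)
    (hnz : ∀ k : ℕ, 1 ≤ k → k ≤ h →
      Real.sinh ((k : ℝ) * θ) - z * Real.sinh (((k : ℝ) - 1) * θ) ≠ 0) :
    w h = 2 * Real.cosh θ *
        (Real.sinh (((h : ℝ) - 1) * θ) - z * Real.sinh (((h : ℝ) - 2) * θ)) /
        (Real.sinh ((h : ℝ) * θ) - z * Real.sinh (((h : ℝ) - 1) * θ)) :=
  tree_recursion_solution_general θ z g hg w hw1 hwrec h hh hnz
end

section
/- For theta > 0, a positive integer h and real z, define W_M(theta, z; h) = 2 cosh(theta) * z * sinh^2(theta) / ( sinh(h*theta) - z*sinh((h-1)*theta) )^2. Fix real numbers Lambda > 0, Y >= 0 and H > 0, and set z(theta) = 1 - Y*theta*Lambda^{-1/2} and h(theta) = floor( H * theta^{-1} * Lambda^{1/2} ). Then the limit as theta tends to 0 from above of W_M(theta, z(theta); h(theta)) equals 2*Lambda / ( Lambda^{1/2} * cosh(H*Lambda^{1/2}) + Y * sinh(H*Lambda^{1/2}) )^2. -/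
open Real Filter Topology

/-! With `a = hθ → H√Λ`, the identity
`sinh a - z sinh (a - θ) = 2 sinh (θ/2) cosh (a - θ/2) + (Y/√Λ) θ sinh (a - θ)`
shows that the denominator of `W_M` is `θ (cosh (H√Λ) + (Y/√Λ) sinh (H√Λ) + o(1))`, while the
numerator is `2θ² (1 + o(1))`; the powers of `θ` cancel in the quotient. -/

theorem Real.sinh_sub_sinh (x y : ℝ) :
    sinh x - sinh y = 2 * sinh ((x - y) / 2) * cosh ((x + y) / 2) := by
  have hx : sinh x = sinh ((x + y) / 2 + (x - y) / 2) := by ring_nf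
  have hy : sinh y = sinh ((x + y) / 2 - (x - y) / 2) := by ring_nf
  rw [hx, hy, sinh_add, sinh_sub]
  ring

theorem Real.tendsto_sinh_div_self :
    Tendsto (fun x : ℝ => sinh x / x) (𝓝[≠] 0) (𝓝 1) := by
  simpa [div_eq_inv_mul] using (hasDerivAt_sinh 0).tendsto_slope_zero

theorem tendsto_natFloor_mul_inv_mul_self {R : Type*} [Field R] [LinearOrder R]
    [IsStrictOrderedRing R] [TopologicalSpace R] [OrderTopology R] [FloorRing R]
    {a : R} (ha : 0 ≤ a) :
    Tendsto (fun θ : R => (⌊a * θ⁻¹⌋₊ : R) * θ) (𝓝[>] 0) (𝓝 a) :=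
  ((tendsto_nat_floor_mul_div_atTop ha).comp tendsto_inv_nhdsGT_zero).congr fun θ => by
    simp [div_inv_eq_mul]

theorem tendsto_mul_cosh_mul_one_sub_mul_sinh_sq_div_sq (b c : ℝ) :
    Tendsto (fun θ : ℝ => b * cosh θ * (1 - c * θ) * sinh θ ^ 2 / θ ^ 2) (𝓝[≠] 0) (𝓝 b) := by
  have hθ : Tendsto (fun θ : ℝ => θ) (𝓝[≠] 0) (𝓝 0) := tendsto_nhdsWithin_of_tendsto_nhds tendsto_id
  have h := ((((continuous_cosh.tendsto 0).comp hθ).const_mul b).mul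
    ((tendsto_const_nhds (x := (1 : ℝ))).sub (hθ.const_mul c))).mul (tendsto_sinh_div_self.pow 2)
  simp only [Function.comp_def, cosh_zero, mul_zero, sub_zero, mul_one, one_pow] at h
  simpa only [div_pow, mul_div_assoc] using h

theorem tendsto_sinh_sub_one_sub_mul_sinh_div {l : Filter ℝ} (hl : l ≤ 𝓝[≠] 0)
    {a : ℝ → ℝ} {L : ℝ} (ha : Tendsto a l (𝓝 L)) (c : ℝ) :
    Tendsto (fun θ => (sinh (a θ) - (1 - c * θ) * sinh (a θ - θ)) / θ) l
      (𝓝 (cosh L + c * sinh L)) := by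
  have hθ : Tendsto (fun θ : ℝ => θ) l (𝓝 0) := tendsto_id.mono_left (hl.trans nhdsWithin_le_nhds)
  have hhalf : Tendsto (fun θ : ℝ => θ / 2) l (𝓝[≠] 0) := by
    refine tendsto_nhdsWithin_of_tendsto_nhds_of_eventually_within _
      (by simpa using hθ.div_const 2) ?_
    filter_upwards [hl self_mem_nhdsWithin] with θ hθ using div_ne_zero hθ two_ne_zero
  have h := (((continuous_cosh.tendsto L).comp (by simpa using ha.sub (hθ.div_const 2))).mul
    (tendsto_sinh_div_self.comp hhalf)).add
    (((continuous_sinh.tendsto L).comp (by simpa using ha.sub hθ)).const_mul c)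
  rw [mul_one] at h
  refine h.congr' ?_
  filter_upwards [hl self_mem_nhdsWithin] with θ (hθ : θ ≠ 0)
  have hdiff : sinh (a θ) - sinh (a θ - θ) = 2 * sinh (θ / 2) * cosh (a θ - θ / 2) := by
    rw [sinh_sub_sinh]
    congr 3 <;> ring
  simp only [Function.comp_apply]
  generalize cosh (a θ - θ / 2) = C at hdiff ⊢
  field_simp
  linear_combination -hdiff

/-- Scaling limit of the disk partition function of two-dimensional causal dynamical
triangulations: with `z(θ) = 1 - Yθ/√Λ` and `h(θ) = ⌊H θ⁻¹ √Λ⌋`, as `θ → 0⁺`,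
`W_M(θ, z(θ); h(θ)) → 2Λ / (√Λ cosh(H√Λ) + Y sinh(H√Λ))²`. -/
theorem disk_amplitude_scaling_limit (Λ Y H : ℝ) (hΛ : 0 < Λ) (hY : 0 ≤ Y) (hH : 0 < H)
    (W : ℝ → ℝ → ℕ → ℝ)
    (hW : ∀ (θ z : ℝ) (h : ℕ), W θ z h = 2 * Real.cosh θ * z * Real.sinh θ ^ 2 /
      (Real.sinh ((h : ℝ) * θ) - z * Real.sinh (((h : ℝ) - 1) * θ)) ^ 2) :
    Filter.Tendsto
      (fun θ : ℝ => W θ (1 - Y * θ / Real.sqrt Λ) ⌊H * θ⁻¹ * Real.sqrt Λ⌋₊)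
      (nhdsWithin 0 (Set.Ioi 0))
      (nhds (2 * Λ / (Real.sqrt Λ * Real.cosh (H * Real.sqrt Λ) +
        Y * Real.sinh (H * Real.sqrt Λ)) ^ 2)) := by
  have hs : 0 < √Λ := sqrt_pos.mpr hΛ
  have hL : 0 ≤ H * √Λ := (mul_pos hH hs).le
  have hfloor : Tendsto (fun θ : ℝ => (⌊H * θ⁻¹ * √Λ⌋₊ : ℝ) * θ) (𝓝[>] 0) (𝓝 (H * √Λ)) := by
    simpa only [mul_right_comm H] using tendsto_natFloor_mul_inv_mul_self hL
  have hnum := (tendsto_mul_cosh_mul_one_sub_mul_sinh_sq_div_sq 2 (Y / √Λ)).mono_left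
    (nhdsGT_le_nhdsNE 0)
  have hden := tendsto_sinh_sub_one_sub_mul_sinh_div (nhdsGT_le_nhdsNE 0) hfloor (Y / √Λ)
  have hK : cosh (H * √Λ) + Y / √Λ * sinh (H * √Λ) ≠ 0 :=
    (add_pos_of_pos_of_nonneg (cosh_pos _)
      (mul_nonneg (div_nonneg hY hs.le) (sinh_nonneg_iff.mpr hL))).ne'
  have hlim : 2 * Λ / (√Λ * cosh (H * √Λ) + Y * sinh (H * √Λ)) ^ 2 =
      2 / (cosh (H * √Λ) + Y / √Λ * sinh (H * √Λ)) ^ 2 := by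
    field_simp
    rw [sq_sqrt hΛ.le]
  rw [hlim]
  refine (hnum.div (hden.pow 2) (pow_ne_zero 2 hK)).congr' ?_
  filter_upwards [self_mem_nhdsWithin] with θ (hθ : 0 < θ)
  rw [Pi.div_apply, hW, div_pow, div_div_div_cancel_right₀ (pow_ne_zero 2 hθ.ne'), sub_one_mul,
    mul_div_right_comm Y θ]
end

section
/- Let theta > 0, let h >= 4 be an integer, and let x and y be real numbers. Define w_{h-1}(y) = 2 cosh(theta) * ( sinh((h-2)theta) - y*sinh((h-3)theta) ) / ( sinh((h-1)theta) - y*sinh((h-2)theta) ) and g = 1/(2 cosh theta). Then, wherever the denominators sinh((h-1)theta) - y*sinh((h-2)theta) and sinh((h-1)theta) - (x+y)*sinh((h-2)theta) + x*y*sinh((h-3)theta) are nonzero, y * (d/dy) [ 1/(1 - x*g*w_{h-1}(y)) ] = x*y*sinh^2(theta) / ( sinh((h-1)theta) - (x+y)*sinh((h-2)theta) + x*y*sinh((h-3)theta) )^2. -/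
open Real

/-! With `Sₖ = sinh ((h - k) θ)` and `g = 1 / (2 cosh θ)`, the amplitude `1 / (1 - x g w(t))`
is the Möbius function `t ↦ (S₁ - t S₂) / ((S₁ - x S₂) - t (S₂ - x S₃))`, whose derivative has
numerator `x (S₂² - S₁ S₃)`. Since `(h - 1) θ` and `(h - 3) θ` are `(h - 2) θ ± θ`, the identity
`sinh (a + d) sinh (a - d) = sinh² a - sinh² d` turns this numerator into `x sinh² θ`. -/

theorem Real.sinh_add_mul_sinh_sub (a d : ℝ) :
    sinh (a + d) * sinh (a - d) = sinh a ^ 2 - sinh d ^ 2 := by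
  rw [sinh_add, sinh_sub]
  linear_combination sinh a ^ 2 * cosh_sq_sub_sinh_sq d - sinh d ^ 2 * cosh_sq_sub_sinh_sq a

theorem hasDerivAt_mobius {𝕜 : Type*} [NontriviallyNormedField 𝕜] {a b c d y : 𝕜}
    (hy : c - y * d ≠ 0) :
    HasDerivAt (fun t => (a - t * b) / (c - t * d)) ((a * d - b * c) / (c - y * d) ^ 2) y := by
  have hnum : HasDerivAt (fun t => a - t * b) (-b) y := by
    simpa using ((hasDerivAt_id y).mul_const b).const_sub a
  have hden : HasDerivAt (fun t => c - t * d) (-d) y := by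
    simpa using ((hasDerivAt_id y).mul_const d).const_sub c
  exact (hnum.div hden hy).congr_deriv (by ring)

theorem one_div_one_sub_mul_div {K : Type*} [Field K] {p q r s x t : K} (ht : r - t * s ≠ 0) :
    1 / (1 - x * ((p - t * q) / (r - t * s))) = (r - t * s) / ((r - x * p) - t * (s - x * q)) := by
  have hden :
      1 - x * ((p - t * q) / (r - t * s)) = ((r - x * p) - t * (s - x * q)) / (r - t * s) := by
    field_simp
    ring
  rw [hden, one_div_div]

theorem annulus_amplitude_closed_form_general (θ : ℝ) (h : ℕ)
    (x y : ℝ) (g : ℝ) (hg : g = 1 / (2 * Real.cosh θ))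
    (w : ℝ → ℝ)
    (hw : ∀ t : ℝ, w t = 2 * Real.cosh θ *
      (Real.sinh (((h : ℝ) - 2) * θ) - t * Real.sinh (((h : ℝ) - 3) * θ)) /
      (Real.sinh (((h : ℝ) - 1) * θ) - t * Real.sinh (((h : ℝ) - 2) * θ)))
    (hD1 : Real.sinh (((h : ℝ) - 1) * θ) - y * Real.sinh (((h : ℝ) - 2) * θ) ≠ 0)
    (hD2 : Real.sinh (((h : ℝ) - 1) * θ) - (x + y) * Real.sinh (((h : ℝ) - 2) * θ)
        + x * y * Real.sinh (((h : ℝ) - 3) * θ) ≠ 0) :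
    y * deriv (fun t : ℝ => 1 / (1 - x * g * w t)) y =
      x * y * Real.sinh θ ^ 2 /
        (Real.sinh (((h : ℝ) - 1) * θ) - (x + y) * Real.sinh (((h : ℝ) - 2) * θ)
          + x * y * Real.sinh (((h : ℝ) - 3) * θ)) ^ 2 := by
  have hS : sinh (((h : ℝ) - 1) * θ) * sinh (((h : ℝ) - 3) * θ)
      = sinh (((h : ℝ) - 2) * θ) ^ 2 - sinh θ ^ 2 := by
    rw [show ((h : ℝ) - 1) * θ = ((h : ℝ) - 2) * θ + θ by ring,
      show ((h : ℝ) - 3) * θ = ((h : ℝ) - 2) * θ - θ by ring]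
    exact sinh_add_mul_sinh_sub _ _
  set S₁ := sinh (((h : ℝ) - 1) * θ)
  set S₂ := sinh (((h : ℝ) - 2) * θ)
  set S₃ := sinh (((h : ℝ) - 3) * θ)
  have hxgw (t : ℝ) : x * g * w t = x * ((S₂ - t * S₃) / (S₁ - t * S₂)) := by
    rw [hg, hw, mul_assoc, one_div_mul_eq_div, mul_div_assoc,
      mul_div_cancel_left₀ _ (by positivity : 2 * cosh θ ≠ 0)]
  have hmobius : (fun t => 1 / (1 - x * g * w t)) =ᶠ[nhds y]
      fun t => (S₁ - t * S₂) / ((S₁ - x * S₂) - t * (S₂ - x * S₃)) := by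
    have hcont : ContinuousAt (fun t => S₁ - t * S₂) y := by fun_prop
    filter_upwards [hcont.eventually_ne hD1] with t ht
    rw [hxgw, one_div_one_sub_mul_div ht]
  have hD : (S₁ - x * S₂) - y * (S₂ - x * S₃) = S₁ - (x + y) * S₂ + x * y * S₃ := by ring
  rw [hmobius.deriv_eq, (hasDerivAt_mobius (hD ▸ hD2)).deriv, hD]
  linear_combination -(x * y / (S₁ - (x + y) * S₂ + x * y * S₃) ^ 2) * hS

/-- Closed form of the annulus (cylinder) amplitude of two-dimensional causal dynamical
triangulations: with `g = 1/(2 cosh θ)` and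
`w(t) = 2 cosh θ (sinh((h-2)θ) - t sinh((h-3)θ)) / (sinh((h-1)θ) - t sinh((h-2)θ))`,
wherever the denominators are nonzero,
`y ∂/∂y [1/(1 - x g w(y))]
  = x y sinh²θ / (sinh((h-1)θ) - (x+y) sinh((h-2)θ) + x y sinh((h-3)θ))²`. -/
theorem annulus_amplitude_closed_form (θ : ℝ) (hθ : 0 < θ) (h : ℕ) (hh : 4 ≤ h)
    (x y : ℝ) (g : ℝ) (hg : g = 1 / (2 * Real.cosh θ))
    (w : ℝ → ℝ)
    (hw : ∀ t : ℝ, w t = 2 * Real.cosh θ *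
      (Real.sinh (((h : ℝ) - 2) * θ) - t * Real.sinh (((h : ℝ) - 3) * θ)) /
      (Real.sinh (((h : ℝ) - 1) * θ) - t * Real.sinh (((h : ℝ) - 2) * θ)))
    (hD1 : Real.sinh (((h : ℝ) - 1) * θ) - y * Real.sinh (((h : ℝ) - 2) * θ) ≠ 0)
    (hD2 : Real.sinh (((h : ℝ) - 1) * θ) - (x + y) * Real.sinh (((h : ℝ) - 2) * θ)
        + x * y * Real.sinh (((h : ℝ) - 3) * θ) ≠ 0) :
    y * deriv (fun t : ℝ => 1 / (1 - x * g * w t)) y =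
      x * y * Real.sinh θ ^ 2 /
        (Real.sinh (((h : ℝ) - 1) * θ) - (x + y) * Real.sinh (((h : ℝ) - 2) * θ)
          + x * y * Real.sinh (((h : ℝ) - 3) * θ)) ^ 2 :=
  annulus_amplitude_closed_form_general θ h x y g hg w hw hD1 hD2
end
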